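/- Let k ≥ 0 be an integer and let Σ̃[k] be the group of affine transformations of V* generated by the maps λ ↦ σ.λ (σ ∈ Σ_r) together with the translations λ ↦ λ + (k+r)γ (γ ∈ Λ). Let Σ_r^+ ⊆ Σ̃[k] be the subgroup generated by the maps λ ↦ s_{i,i+1}.λ for 1 ≤ i ≤ r−2 together with λ ↦ s_{r−1,r}.λ + (k+r)·α^{r−1,r}, and let Σ_r^− ⊆ Σ̃[k] be the subgroup generated by the maps λ ↦ s_{i,i+1}.λ for 2 ≤ i ≤ r−1 together with λ ↦ s_{1,2}.λ + (k+r)·α^{1,2}. Then Σ_r^+ and Σ_r^− are each isomorphic to the symmetric group Σ_r, and if r > 2 then Σ_r^+ and Σ_r^− together generate Σ̃[k]. -/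

import Mathlib

/-!
`Σ_r^+` is the conjugate of the dot-action copy of `Σ_r` by the translation by
`t = -(k+r)e_r`, and `Σ_r^-` the conjugate by `t = (k+r)e_1`: conjugating `λ ↦ σ.λ` by the
translation by `t` gives `λ ↦ σ.λ + (t - σ·t)`, and `t - s_{i,j}·t = (t_i - t_j)α^{ij}` vanishes
for the transpositions fixing the support of `t` and is `(k+r)α` for the one moving it.
So both groups are injective images of `Σ_r`.

For `r > 2` every simple transposition `s_{i,i+1}` is a generator of `Σ_r^+` or of `Σ_r^-`, so
their join contains the whole dot action. Dividing the special generator of `Σ_r^+` by its dot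
part gives the translation by `(k+r)α^{r-1,r}`, whose conjugates `(k+r)α^{i,r}` under the dot
action generate the translations by `(k+r)Λ`.
-/

open scoped BigOperators

attribute [local instance] Classical.propDecidable

noncomputable section

namespace Verlinde

variable {r : ℕ}

/-- The root `α^{ij} = e_i - e_j`, viewed as the linear functional `x_i - x_j`. -/
def stdRoot (r : ℕ) (i j : Fin r) : Fin r → ℝ :=
  fun t => (if t = i then 1 else 0) - (if t = j then 1 else 0)

/-- `B ∈ 𝓑`: an ordered tuple of roots forming a linear basis of
`V* = {a : ∑ i, a i = 0}`. -/
def IsOB (r : ℕ) (B : Fin (r - 1) → Fin r → ℝ) : Prop :=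
  (∀ m, ∃ i j, i ≠ j ∧ B m = stdRoot r i j) ∧
    LinearIndependent ℝ B ∧
    ∀ a : Fin r → ℝ, (∑ i, a i) = 0 → a ∈ Submodule.span ℝ (Set.range B)

/-- Coordinates of `a` with respect to the tuple `B` (junk unless such
coordinates exist; they are unique when `B` is linearly independent). -/
def coordsOf (B : Fin (r - 1) → Fin r → ℝ) (a : Fin r → ℝ) : Fin (r - 1) → ℝ :=
  if h : ∃ c : Fin (r - 1) → ℝ, a = ∑ j, c j • B j then h.choose else 0

/-- The integer part `[a]_B ∈ Λ`. -/
def intPart (B : Fin (r - 1) → Fin r → ℝ) (a : Fin r → ℝ) : Fin r → ℝ :=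
  ∑ j, (⌊coordsOf B a j⌋ : ℝ) • B j

/-- The fractional part `{a}_B`. -/
def fracPart (B : Fin (r - 1) → Fin r → ℝ) (a : Fin r → ℝ) : Fin r → ℝ :=
  a - intPart B a

/-- `a ∈ V*` is regular if all its `B`-coordinates are non-integral, for every `B ∈ 𝓑`,
i.e. `{a}_B ∈ ∑_j (0,1)·β^{[j]}` for every `B ∈ 𝓑`. -/
def IsRegular (r : ℕ) (a : Fin r → ℝ) : Prop :=
  ∀ B, IsOB r B → ∀ j, Int.fract (coordsOf B a j) ≠ 0

/-- The flag `Fl(B)`: `Fl(B) j = span (β^{[j]}, …, β^{[r-1]})`. -/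
def flagOf (B : Fin (r - 1) → Fin r → ℝ) : Fin (r - 1) → Submodule ℝ (Fin r → ℝ) :=
  fun j => Submodule.span ℝ {x | ∃ i, j ≤ i ∧ B i = x}

/-- `B ⊣ C`. -/
def Dashv (B C : Fin (r - 1) → Fin r → ℝ) : Prop :=
  ∀ τ : Equiv.Perm (Fin (r - 1)), flagOf (B ∘ τ) ≠ flagOf C

/-- A diagonal basis: a subset of `𝓑` of cardinality `(r-1)!` any two distinct
members of which satisfy `B ⊣ C`. -/
def IsDiagonalBasis (r : ℕ) (D : Finset (Fin (r - 1) → Fin r → ℝ)) : Prop :=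
  D.card = (r - 1).factorial ∧ (∀ B ∈ D, IsOB r B) ∧
    ∀ B ∈ D, ∀ C ∈ D, B ≠ C → Dashv B C

/-- The index of the last coordinate (`r` in `1`-indexed notation). -/
def lastI (r : ℕ) (h : 0 < r) : Fin r := ⟨r - 1, by omega⟩

/-- `ρ = ((r-1)/2, (r-3)/2, …, (1-r)/2)`. -/
def rho (r : ℕ) : Fin r → ℝ := fun i => ((r : ℝ) - 1) / 2 - (i : ℝ)

/-- `σ · a`, where `(σ·a)_i = a_{σ⁻¹ i}`. -/
def permVec (σ : Equiv.Perm (Fin r)) (a : Fin r → ℝ) : Fin r → ℝ := fun i => a (σ⁻¹ i)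

/-- A nontrivial (ordered) partition `Π = (Π′, Π″)`, encoded by `Π′ = P`:
both parts nonempty and `r ∈ Π″`. -/
def NontrivPart (r : ℕ) (h : 0 < r) (P : Finset (Fin r)) : Prop :=
  P.Nonempty ∧ lastI r h ∉ P

/-- The wall `S_{Π,l} ⊆ V*`. -/
def wallSet (r : ℕ) (P : Finset (Fin r)) (l : ℤ) : Set (Fin r → ℝ) :=
  {c | (∑ i, c i) = 0 ∧ (∑ i ∈ P, c i) = (l : ℝ)}

/-- The simplex `Δ` of admissible parabolic weights. -/
def DeltaSet (r : ℕ) (h : 0 < r) : Set (Fin r → ℝ) :=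
  {c | (∑ i, c i) = 0 ∧ (∀ i j : Fin r, i < j → c j < c i) ∧
    c ⟨0, h⟩ - c (lastI r h) < 1}

/-- The chamber of a (regular) point `c ∈ V*`. -/
def chamberOf (r : ℕ) (c : Fin r → ℝ) : Set (Fin r → ℝ) :=
  {b | (∑ i, b i) = 0 ∧ IsRegular r b ∧ ∀ B, IsOB r B → intPart B b = intPart B c}

/-- `{i,j}` is an edge of `Tree(B)`. -/
def IsTreeEdge (B : Fin (r - 1) → Fin r → ℝ) (i j : Fin r) : Prop :=
  ∃ m, B m = stdRoot r i j ∨ B m = stdRoot r j i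

/-- `B` splits along the partition `Π` (with `Π′ = P`): exactly one edge of
`Tree(B)` joins `Π′` and `Π″`. -/
def SplitsAlong (B : Fin (r - 1) → Fin r → ℝ) (P : Finset (Fin r)) : Prop :=
  ∃! pr : Fin r × Fin r, pr.1 ∈ P ∧ pr.2 ∉ P ∧ IsTreeEdge B pr.1 pr.2

/-- The linking root `β_link = α^{pq}` with `p ∈ Π′`, `q ∈ Π″`. -/
def betaLink (B : Fin (r - 1) → Fin r → ℝ) (P : Finset (Fin r)) : Fin r → ℝ :=
  if h : ∃ pr : Fin r × Fin r, pr.1 ∈ P ∧ pr.2 ∉ P ∧ IsTreeEdge B pr.1 pr.2 then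
    stdRoot r h.choose.1 h.choose.2
  else 0

/-- The dot action `λ ↦ σ.λ = σ·(λ+ρ) − ρ`, as a permutation of `ℝ^r`. -/
def dotEquiv (r : ℕ) (σ : Equiv.Perm (Fin r)) : Equiv.Perm (Fin r → ℝ) :=
  (Equiv.addRight (rho r)).trans
    ((Equiv.arrowCongr σ (Equiv.refl ℝ)).trans (Equiv.subRight (rho r)))

open Equiv

lemma dotEquiv_apply (σ : Perm (Fin r)) (l : Fin r → ℝ) :
    dotEquiv r σ l = permVec σ (l + rho r) - rho r := rfl

lemma dotEquiv_add (σ : Perm (Fin r)) (l v : Fin r → ℝ) :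
    dotEquiv r σ (l + v) = dotEquiv r σ l + permVec σ v := by
  funext i
  simp only [dotEquiv_apply, permVec, Pi.add_apply, Pi.sub_apply]
  ring

def dotHom (r : ℕ) : Perm (Fin r) →* Perm (Fin r → ℝ) where
  toFun := dotEquiv r
  map_one' := by
    ext l i
    simp [dotEquiv_apply, permVec]
  map_mul' σ τ := by
    ext l i
    simp [dotEquiv_apply, permVec, Perm.mul_apply]

lemma dotHom_apply (σ : Perm (Fin r)) : dotHom r σ = dotEquiv r σ := rfl

lemma dotHom_injective : Function.Injective (dotHom r) := by
  refine (injective_iff_map_eq_one _).2 fun σ hσ => ?_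
  rw [← inv_eq_one]
  ext i
  have h := congrFun (congrArg (· ((fun j : Fin r => (j : ℝ)) - rho r)) hσ) i
  simp only [dotHom, MonoidHom.coe_mk, OneHom.coe_mk, dotEquiv_apply, sub_add_cancel, permVec,
    Pi.sub_apply, Perm.one_apply, sub_left_inj, Nat.cast_inj] at h
  simpa using h

lemma dotEquiv_mul_addRight_mul_inv (σ : Perm (Fin r)) (v : Fin r → ℝ) :
    dotEquiv r σ * Equiv.addRight v * (dotEquiv r σ)⁻¹ = Equiv.addRight (permVec σ v) := by
  ext l : 1
  rw [Perm.mul_apply, Perm.mul_apply, Equiv.coe_addRight, dotEquiv_add, Perm.inv_def,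
    apply_symm_apply]
  rfl

lemma permVec_smul (σ : Perm (Fin r)) (c : ℝ) (v : Fin r → ℝ) :
    permVec σ (c • v) = c • permVec σ v := rfl

lemma stdRoot_eq_sub_single (i j : Fin r) : stdRoot r i j = Pi.single i 1 - Pi.single j 1 := by
  funext t
  simp [stdRoot, Pi.single_apply]

lemma permVec_stdRoot (σ : Perm (Fin r)) (a b : Fin r) :
    permVec σ (stdRoot r a b) = stdRoot r (σ a) (σ b) := by
  funext i
  simp only [permVec, stdRoot, Perm.inv_eq_iff_eq]

lemma sub_permVec_swap (t : Fin r → ℝ) (a b : Fin r) :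
    t - permVec (swap a b) t = (t a - t b) • stdRoot r a b := by
  funext j
  simp only [permVec, swap_inv, Pi.sub_apply, Pi.smul_apply, smul_eq_mul, stdRoot]
  rcases eq_or_ne j a with rfl | hja
  · rcases eq_or_ne j b with rfl | hjb <;> simp [*]
  · rcases eq_or_ne j b with rfl | hjb
    · simp [hja]
    · simp [hja, hjb, swap_apply_of_ne_of_ne]

def shiftedDotHom (r : ℕ) (t : Fin r → ℝ) : Perm (Fin r) →* Perm (Fin r → ℝ) :=
  (MulAut.conj (Equiv.addRight t)).toMonoidHom.comp (dotHom r)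

lemma shiftedDotHom_injective (t : Fin r → ℝ) : Function.Injective (shiftedDotHom r t) :=
  (MulAut.conj (Equiv.addRight t)).injective.comp dotHom_injective

lemma shiftedDotHom_apply (t : Fin r → ℝ) (σ : Perm (Fin r)) :
    shiftedDotHom r t σ = (dotEquiv r σ).trans (Equiv.addRight (t - permVec σ t)) := by
  ext l : 1
  simp only [shiftedDotHom, MonoidHom.coe_comp, MulEquiv.coe_toMonoidHom, Function.comp_apply,
    MulAut.conj_apply, Perm.mul_apply, Equiv.neg_addRight, Equiv.coe_addRight,
    Equiv.trans_apply, dotHom_apply, dotEquiv_add]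
  funext i
  simp only [permVec, Pi.add_apply, Pi.neg_apply, Pi.sub_apply]
  ring

lemma shiftedDotHom_swap (t : Fin r → ℝ) (a b : Fin r) :
    shiftedDotHom r t (swap a b) =
      (dotEquiv r (swap a b)).trans (Equiv.addRight ((t a - t b) • stdRoot r a b)) := by
  rw [shiftedDotHom_apply, sub_permVec_swap]

lemma shiftedDotHom_swap_of_eq {t : Fin r → ℝ} {a b : Fin r} (h : t a = t b) :
    shiftedDotHom r t (swap a b) = dotEquiv r (swap a b) := by
  rw [shiftedDotHom_swap, h, sub_self, zero_smul, Equiv.addRight_zero]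
  rfl

def adjSwaps (r : ℕ) : Set (Perm (Fin r)) :=
  {σ | ∃ i, ∃ h : i + 1 < r, σ = swap ⟨i, Nat.lt_of_succ_lt h⟩ ⟨i + 1, h⟩}

lemma closure_adjSwaps (r : ℕ) : Subgroup.closure (adjSwaps r) = ⊤ := by
  obtain _ | n := r
  · exact Subsingleton.elim _ _
  · apply Subgroup.closure_eq_top_of_mclosure_eq_top
    rw [← Perm.mclosure_swap_castSucc_succ n]
    congr 1
    ext σ
    constructor
    · rintro ⟨i, hi, rfl⟩
      exact ⟨⟨i, by omega⟩, rfl⟩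
    · rintro ⟨i, rfl⟩
      exact ⟨i, by omega, rfl⟩

lemma range_eq_closure_image_adjSwaps {G : Type*} [Group G] (φ : Perm (Fin r) →* G) :
    φ.range = Subgroup.closure (φ '' adjSwaps r) := by
  rw [MonoidHom.range_eq_map, ← closure_adjSwaps, MonoidHom.map_closure]

lemma nonempty_mulEquiv_of_eq_range {G H : Type*} [Group G] [Group H] {K : Subgroup H}
    {φ : G →* H} (hφ : Function.Injective φ) (hK : K = φ.range) : Nonempty (K ≃* G) :=
  ⟨(MulEquiv.subgroupCongr hK).trans (MonoidHom.ofInjective hφ).symm⟩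

def translations {V : Type*} [AddCommGroup V] (H : Subgroup (Perm V)) : AddSubgroup V where
  carrier := {v | Equiv.addRight v ∈ H}
  zero_mem' := by
    rw [Set.mem_ofPred, Equiv.addRight_zero]
    exact one_mem H
  add_mem' {a b} ha hb := by
    rw [Set.mem_ofPred, Equiv.addRight_add]
    exact mul_mem hb ha
  neg_mem' {a} ha := by
    rw [Set.mem_ofPred, ← Equiv.neg_addRight]
    exact inv_mem ha

lemma mem_translations {V : Type*} [AddCommGroup V] {H : Subgroup (Perm V)} {v : V} :
    v ∈ translations H ↔ Equiv.addRight v ∈ H := Iff.rfl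

lemma intCast_eq_sum_zsmul_stdRoot {γ : Fin r → ℤ} (hγ : ∑ i, γ i = 0) (y : Fin r) :
    (fun i => (γ i : ℝ)) = ∑ j, γ j • stdRoot r j y := by
  have hγ' : ∑ j, (γ j : ℝ) = 0 := by exact_mod_cast hγ
  funext i
  simp [stdRoot, Finset.sum_apply, mul_sub, Finset.sum_sub_distrib, hγ']

section Translations

variable {H : Subgroup (Perm (Fin r → ℝ))}

lemma permVec_mem_translations (hdot : ∀ σ, dotEquiv r σ ∈ H) {v : Fin r → ℝ}
    (hv : v ∈ translations H) (σ : Perm (Fin r)) :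
    permVec σ v ∈ translations H := by
  rw [mem_translations, ← dotEquiv_mul_addRight_mul_inv]
  exact mul_mem (mul_mem (hdot σ) hv) (inv_mem (hdot σ))

lemma smul_stdRoot_mem_translations (hdot : ∀ σ, dotEquiv r σ ∈ H) {c : ℝ} {x y : Fin r}
    (hxy : x ≠ y) (h : c • stdRoot r x y ∈ translations H) (a : Fin r) :
    c • stdRoot r a y ∈ translations H := by
  rcases eq_or_ne a y with rfl | hay
  · simp [stdRoot_eq_sub_single]
  · have := permVec_mem_translations hdot h (swap x a)
    rwa [permVec_smul, permVec_stdRoot, swap_apply_left, swap_apply_of_ne_of_ne hxy.symm hay.symm]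
      at this

lemma smul_intCast_mem_translations (hdot : ∀ σ, dotEquiv r σ ∈ H) {c : ℝ} {x y : Fin r}
    (hxy : x ≠ y) (h : c • stdRoot r x y ∈ translations H) {γ : Fin r → ℤ} (hγ : ∑ i, γ i = 0) :
    c • (fun i => (γ i : ℝ)) ∈ translations H := by
  rw [intCast_eq_sum_zsmul_stdRoot hγ y, Finset.smul_sum]
  refine sum_mem fun j _ => ?_
  rw [smul_comm]
  exact zsmul_mem (smul_stdRoot_mem_translations hdot hxy h j) _

end Translations

def affineWeylGroup (r k : ℕ) : Subgroup (Perm (Fin r → ℝ)) :=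
  Subgroup.closure ({e | ∃ σ : Perm (Fin r), e = dotEquiv r σ} ∪
    {e | ∃ γ : Fin r → ℤ, (∑ i, γ i) = 0 ∧
      e = Equiv.addRight (((k : ℝ) + r) • fun i => (γ i : ℝ))})

def sigmaPlus (r k : ℕ) (hr : 2 ≤ r) : Subgroup (Perm (Fin r → ℝ)) :=
  Subgroup.closure ({e | ∃ i : ℕ, ∃ hi : i + 2 < r,
      e = dotEquiv r (swap ⟨i, Nat.lt_of_succ_lt (Nat.lt_of_succ_lt hi)⟩
        ⟨i + 1, Nat.lt_of_succ_lt hi⟩)} ∪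
    {(dotEquiv r (swap ⟨r - 2, Nat.sub_lt (Nat.zero_lt_of_lt hr) Nat.two_pos⟩
        ⟨r - 1, Nat.sub_lt (Nat.zero_lt_of_lt hr) Nat.one_pos⟩)).trans
      (Equiv.addRight (((k : ℝ) + r) •
        stdRoot r ⟨r - 2, Nat.sub_lt (Nat.zero_lt_of_lt hr) Nat.two_pos⟩
          ⟨r - 1, Nat.sub_lt (Nat.zero_lt_of_lt hr) Nat.one_pos⟩))})

def sigmaMinus (r k : ℕ) (hr : 2 ≤ r) : Subgroup (Perm (Fin r → ℝ)) :=
  Subgroup.closure ({e | ∃ i : ℕ, ∃ _h1 : 1 ≤ i, ∃ hi : i + 1 < r,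
      e = dotEquiv r (swap ⟨i, Nat.lt_of_succ_lt hi⟩ ⟨i + 1, hi⟩)} ∪
    {(dotEquiv r (swap ⟨0, Nat.zero_lt_of_lt hr⟩ ⟨1, hr⟩)).trans
      (Equiv.addRight (((k : ℝ) + r) • stdRoot r ⟨0, Nat.zero_lt_of_lt hr⟩ ⟨1, hr⟩))})

lemma sigmaPlus_eq_range (hr : 2 ≤ r) (k : ℕ) :
    sigmaPlus r k hr =
      (shiftedDotHom r (Pi.single (lastI r (Nat.zero_lt_of_lt hr)) (-((k : ℝ) + r)))).range := by
  set t : Fin r → ℝ := Pi.single (lastI r (Nat.zero_lt_of_lt hr)) (-((k : ℝ) + r))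
  have hmid (i : ℕ) (hi : i + 2 < r) :
      shiftedDotHom r t (swap ⟨i, by omega⟩ ⟨i + 1, by omega⟩) =
        dotEquiv r (swap ⟨i, by omega⟩ ⟨i + 1, by omega⟩) := by
    refine shiftedDotHom_swap_of_eq ?_
    simp [t, lastI, Fin.ext_iff, show i ≠ r - 1 by omega, show i + 1 ≠ r - 1 by omega]
  have hlast : shiftedDotHom r t (swap ⟨r - 2, by omega⟩ ⟨r - 1, by omega⟩) =
      (dotEquiv r (swap ⟨r - 2, by omega⟩ ⟨r - 1, by omega⟩)).trans
        (Equiv.addRight (((k : ℝ) + r) • stdRoot r ⟨r - 2, by omega⟩ ⟨r - 1, by omega⟩)) := by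
    rw [shiftedDotHom_swap]
    simp [t, lastI, Fin.ext_iff, show r - 2 ≠ r - 1 by omega]
  have hsucc : (⟨r - 2 + 1, by omega⟩ : Fin r) = ⟨r - 1, by omega⟩ := Fin.ext (by simp; omega)
  rw [range_eq_closure_image_adjSwaps, sigmaPlus]
  congr 1
  ext e
  constructor
  · rintro (⟨i, hi, rfl⟩ | rfl)
    · exact ⟨_, ⟨i, by omega, rfl⟩, hmid i hi⟩
    · exact ⟨_, ⟨r - 2, by omega, by rw [hsucc]⟩, hlast⟩
  · rintro ⟨_, ⟨i, hi, rfl⟩, rfl⟩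
    by_cases hi' : i + 2 < r
    · exact Or.inl ⟨i, hi', hmid i hi'⟩
    · obtain rfl : i = r - 2 := by omega
      exact Or.inr (by rw [hsucc, hlast]; rfl)

lemma sigmaMinus_eq_range (hr : 2 ≤ r) (k : ℕ) :
    sigmaMinus r k hr =
      (shiftedDotHom r (Pi.single ⟨0, Nat.zero_lt_of_lt hr⟩ ((k : ℝ) + r))).range := by
  set t : Fin r → ℝ := Pi.single ⟨0, Nat.zero_lt_of_lt hr⟩ ((k : ℝ) + r)
  have hmid (i : ℕ) (h1 : 1 ≤ i) (hi : i + 1 < r) :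
      shiftedDotHom r t (swap ⟨i, by omega⟩ ⟨i + 1, hi⟩) =
        dotEquiv r (swap ⟨i, by omega⟩ ⟨i + 1, hi⟩) := by
    refine shiftedDotHom_swap_of_eq ?_
    simp [t, Fin.ext_iff, show i ≠ 0 by omega]
  have hfirst : shiftedDotHom r t (swap ⟨0, by omega⟩ ⟨1, by omega⟩) =
      (dotEquiv r (swap ⟨0, by omega⟩ ⟨1, by omega⟩)).trans
        (Equiv.addRight (((k : ℝ) + r) • stdRoot r ⟨0, by omega⟩ ⟨1, by omega⟩)) := by
    rw [shiftedDotHom_swap]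
    simp [t, Fin.ext_iff]
  rw [range_eq_closure_image_adjSwaps, sigmaMinus]
  congr 1
  ext e
  constructor
  · rintro (⟨i, h1, hi, rfl⟩ | rfl)
    · exact ⟨_, ⟨i, hi, rfl⟩, hmid i h1 hi⟩
    · exact ⟨_, ⟨0, by omega, rfl⟩, hfirst⟩
  · rintro ⟨_, ⟨i, hi, rfl⟩, rfl⟩
    by_cases h1 : 1 ≤ i
    · exact Or.inl ⟨i, h1, hi, hmid i h1 hi⟩
    · obtain rfl : i = 0 := by omega
      exact Or.inr hfirst

section AffineWeylGroup

variable (k : ℕ)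

lemma dotEquiv_mem_affineWeylGroup (σ : Perm (Fin r)) : dotEquiv r σ ∈ affineWeylGroup r k :=
  Subgroup.subset_closure (Or.inl ⟨σ, rfl⟩)

lemma dotEquiv_trans_addRight_mem_affineWeylGroup (σ : Perm (Fin r)) (a b : Fin r) :
    (dotEquiv r σ).trans (Equiv.addRight (((k : ℝ) + r) • stdRoot r a b)) ∈
      affineWeylGroup r k := by
  have hroot : Equiv.addRight (((k : ℝ) + r) • stdRoot r a b) ∈ affineWeylGroup r k := by
    refine Subgroup.subset_closure (Or.inr ⟨Pi.single a 1 - Pi.single b 1, by simp, ?_⟩)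
    congr 2
    funext i
    simp [stdRoot, Pi.single_apply]
  exact mul_mem hroot (dotEquiv_mem_affineWeylGroup k σ)

lemma sigmaPlus_le_affineWeylGroup (hr : 2 ≤ r) : sigmaPlus r k hr ≤ affineWeylGroup r k := by
  rw [sigmaPlus, Subgroup.closure_le]
  rintro e (⟨i, hi, rfl⟩ | rfl)
  · exact dotEquiv_mem_affineWeylGroup k _
  · exact dotEquiv_trans_addRight_mem_affineWeylGroup k _ _ _

lemma sigmaMinus_le_affineWeylGroup (hr : 2 ≤ r) : sigmaMinus r k hr ≤ affineWeylGroup r k := by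
  rw [sigmaMinus, Subgroup.closure_le]
  rintro e (⟨i, h1, hi, rfl⟩ | rfl)
  · exact dotEquiv_mem_affineWeylGroup k _
  · exact dotEquiv_trans_addRight_mem_affineWeylGroup k _ _ _

lemma dotEquiv_mem_sigmaPlus_sup_sigmaMinus (hr : 2 < r) (σ : Perm (Fin r)) :
    dotEquiv r σ ∈ sigmaPlus r k hr.le ⊔ sigmaMinus r k hr.le := by
  suffices (dotHom r).range ≤ sigmaPlus r k hr.le ⊔ sigmaMinus r k hr.le from this ⟨σ, rfl⟩
  rw [range_eq_closure_image_adjSwaps, Subgroup.closure_le]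
  rintro _ ⟨_, ⟨i, hi, rfl⟩, rfl⟩
  by_cases hi' : i + 2 < r
  · exact Subgroup.mem_sup_left (Subgroup.subset_closure (Or.inl ⟨i, hi', rfl⟩))
  · exact Subgroup.mem_sup_right (Subgroup.subset_closure (Or.inl ⟨i, by omega, hi, rfl⟩))

lemma sigmaPlus_sup_sigmaMinus (hr : 2 < r) :
    sigmaPlus r k hr.le ⊔ sigmaMinus r k hr.le = affineWeylGroup r k := by
  set H := sigmaPlus r k hr.le ⊔ sigmaMinus r k hr.le
  have hdot := dotEquiv_mem_sigmaPlus_sup_sigmaMinus k hr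
  have hne : (⟨r - 2, by omega⟩ : Fin r) ≠ ⟨r - 1, by omega⟩ := by simp [Fin.ext_iff]; omega
  have hroot :
      ((k : ℝ) + r) • stdRoot r ⟨r - 2, by omega⟩ ⟨r - 1, by omega⟩ ∈ translations H := by
    have hgen : Equiv.addRight (((k : ℝ) + r) • stdRoot r ⟨r - 2, by omega⟩ ⟨r - 1, by omega⟩) *
        dotEquiv r (swap ⟨r - 2, by omega⟩ ⟨r - 1, by omega⟩) ∈ H :=
      Subgroup.mem_sup_left (Subgroup.subset_closure (Or.inr rfl))
    rw [mem_translations, ← mul_inv_cancel_right (Equiv.addRight _) (dotEquiv r (swap _ _))]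
    exact mul_mem hgen (inv_mem (hdot _))
  refine le_antisymm
    (sup_le (sigmaPlus_le_affineWeylGroup k _) (sigmaMinus_le_affineWeylGroup k _)) ?_
  rw [affineWeylGroup, Subgroup.closure_le]
  rintro e (⟨σ, rfl⟩ | ⟨γ, hγ, rfl⟩)
  · exact hdot σ
  · exact smul_intCast_mem_translations hdot hne hroot hγ

end AffineWeylGroup

/-- (Lemma `lem:generate`.)  The subgroups `Σ_r^+` and
`Σ_r^−` of the affine Weyl group `Σ̃[k]` are isomorphic to `Σ_r`, and for
`r > 2` they generate `Σ̃[k]`.  (Indices are `0`-based.) -/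
theorem stabilizer_subgroups_generate_affine_weyl_group
    (r : ℕ) (hr : 2 ≤ r) (k : ℕ)
    (Gaff Gplus Gminus : Subgroup (Equiv.Perm (Fin r → ℝ)))
    -- `Σ̃[k]`: generated by the dot action and the translations by `(k+r)Λ`
    (hGaff : Gaff = Subgroup.closure
      ({e | ∃ σ : Equiv.Perm (Fin r), e = dotEquiv r σ} ∪
        {e | ∃ γ : Fin r → ℤ, (∑ i, γ i) = 0 ∧
          e = Equiv.addRight (((k : ℝ) + r) • fun i => (γ i : ℝ))}))
    -- `Σ_r^+`: generated by `λ ↦ s_{i,i+1}.λ` (`1 ≤ i ≤ r−2`) and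
    -- `λ ↦ s_{r−1,r}.λ + (k+r)·α^{r−1,r}`
    (hGplus : Gplus = Subgroup.closure
      ({e | ∃ i : ℕ, ∃ _hi : i + 2 < r,
          e = dotEquiv r (Equiv.swap ⟨i, by omega⟩ ⟨i + 1, by omega⟩)} ∪
        {(dotEquiv r (Equiv.swap ⟨r - 2, by omega⟩ ⟨r - 1, by omega⟩)).trans
          (Equiv.addRight (((k : ℝ) + r) •
            stdRoot r ⟨r - 2, by omega⟩ ⟨r - 1, by omega⟩))}))
    -- `Σ_r^−`: generated by `λ ↦ s_{i,i+1}.λ` (`2 ≤ i ≤ r−1`) and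
    -- `λ ↦ s_{1,2}.λ + (k+r)·α^{1,2}`
    (hGminus : Gminus = Subgroup.closure
      ({e | ∃ i : ℕ, ∃ _h1 : 1 ≤ i, ∃ _hi : i + 1 < r,
          e = dotEquiv r (Equiv.swap ⟨i, by omega⟩ ⟨i + 1, by omega⟩)} ∪
        {(dotEquiv r (Equiv.swap ⟨0, by omega⟩ ⟨1, by omega⟩)).trans
          (Equiv.addRight (((k : ℝ) + r) •
            stdRoot r ⟨0, by omega⟩ ⟨1, by omega⟩))})) :
    Nonempty (Gplus ≃* Equiv.Perm (Fin r)) ∧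
    Nonempty (Gminus ≃* Equiv.Perm (Fin r)) ∧
    (2 < r → Gplus ⊔ Gminus = Gaff) := by
  change Gaff = affineWeylGroup r k at hGaff
  change Gplus = sigmaPlus r k hr at hGplus
  change Gminus = sigmaMinus r k hr at hGminus
  subst hGaff hGplus hGminus
  exact ⟨nonempty_mulEquiv_of_eq_range (shiftedDotHom_injective _) (sigmaPlus_eq_range hr k),
    nonempty_mulEquiv_of_eq_range (shiftedDotHom_injective _) (sigmaMinus_eq_range hr k),
    sigmaPlus_sup_sigmaMinus k⟩

end Verlinde
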